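/- arXiv:1909.03651 — 2 statements merged into one kernel-verified Lean document; each statement's English description precedes it below -/
import Mathlib

section
/- The function (21z⁶/(31π⁶)) · e^{-z}/(1+e^{-z})² integrates to 1 over ℝ, i.e., BLG(6) is a probability density. -/
open Real MeasureTheory Filter

noncomputable def C (α β : ℝ) : ℝ :=
  (210 + 35 * π ^ 2 * α ^ 2 + 98 * π ^ 4 * α * β + 155 * π ^ 6 * β ^ 2) / 105

noncomputable def g (z : ℝ) : ℝ := Real.exp (-z) / (1 + Real.exp (-z)) ^ 2

noncomputable def f (z α β : ℝ) : ℝ := ((1 - α * z - β * z ^ 3) ^ 2 + 1) / C α β * g z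

/-!
Since `g` is even, the integral is twice the integral over `(0, ∞)`. There `g` expands as
`∑ (-1)^(n+1) n e^{-nt}`, so termwise integration (a Mellin transform) gives
`∫₀^∞ t^k g(t) dt = k! η(k)` with `η(k) = ∑ (-1)^(n+1)/n^k = (1 - 2^{1-k}) ζ(k)`.
For `k = 6`, `ζ(6) = π⁶/945` gives `∫₀^∞ t⁶ g = 720 · (31/32) · π⁶/945 = 31π⁶/42`.
-/

open Set Nat

theorem g_neg (z : ℝ) : g (-z) = g z := by
  rw [g, g, neg_neg, exp_neg]
  field_simp
  ring

theorem hasSum_g {t : ℝ} (ht : 0 < t) :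
    HasSum (fun n : ℕ => (-1) ^ (n + 1) * n * exp (-n * t)) (g t) := by
  have hr : ‖-exp (-t)‖ < 1 := by
    rw [norm_neg, norm_of_nonneg (exp_pos _).le, exp_lt_one_iff]
    linarith
  have h := (hasSum_coe_mul_geometric_of_norm_lt_one hr).neg
  rw [sub_neg_eq_add, neg_div, neg_neg, ← g] at h
  refine h.congr_fun fun n => ?_
  rw [neg_pow (exp (-t)), ← exp_nat_mul, pow_succ]
  ring_nf

theorem integral_pow_mul_g {k : ℕ} (hk : 2 ≤ k) :
    ∫ t in Ioi 0, t ^ k * g t = k ! * ∑' n : ℕ, (-1) ^ (n + 1) / (n : ℝ) ^ k := by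
  have hk0 : k ≠ 0 := by omega
  have hsummable :
      Summable fun n : ℕ => ‖((-1) ^ (n + 1) * n : ℂ)‖ / (n : ℝ) ^ ((k + 1 : ℂ).re) := by
    refine (summable_one_div_nat_pow.mpr (by omega : 1 < k)).congr fun n => ?_
    simp only [← rpow_natCast, one_div, Complex.norm_mul, norm_pow, norm_neg, norm_one, one_pow,
      RCLike.norm_natCast, one_mul, Complex.add_re, Complex.natCast_re, Complex.one_re]
    rcases eq_or_ne n 0 with rfl | hn
    · simp [hk0]
    · rw [rpow_add_one (by exact_mod_cast hn)]
      field_simp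
  have hmellin := hasSum_mellin (a := fun n : ℕ => ((-1) ^ (n + 1) * n : ℂ)) (p := (↑))
    (F := fun t => (g t : ℂ)) (s := k + 1)
    (fun n => (eq_or_ne n 0).imp (by simp +contextual) (cast_pos.mpr ∘ Nat.pos_of_ne_zero))
    (by norm_cast; positivity)
    (fun t ht => by exact_mod_cast Complex.hasSum_ofReal.mpr (hasSum_g ht))
    hsummable
  have hmellin_eq :
      mellin (fun t => (g t : ℂ)) (k + 1) = ((∫ t in Ioi 0, t ^ k * g t : ℝ) : ℂ) := by
    rw [mellin, ← integral_complex_ofReal]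
    refine setIntegral_congr_fun measurableSet_Ioi fun t _ => ?_
    simp only [add_sub_cancel_right, Complex.cpow_natCast, smul_eq_mul]
    push_cast
    rfl
  have hterm (n : ℕ) : Complex.Gamma (k + 1) * ((-1) ^ (n + 1) * n) / (n : ℝ) ^ ((k : ℂ) + 1) =
      ((k ! * ((-1) ^ (n + 1) / (n : ℝ) ^ k) : ℝ) : ℂ) := by
    rw [Complex.Gamma_nat_eq_factorial, show (k : ℂ) + 1 = (k + 1 : ℕ) by push_cast; rfl,
      Complex.cpow_natCast]
    rcases eq_or_ne n 0 with rfl | hn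
    · simp [hk0]
    · have : (n : ℂ) ≠ 0 := by exact_mod_cast hn
      push_cast
      field_simp
      ring
  rw [hmellin_eq] at hmellin
  simp only [hterm, Complex.hasSum_ofReal] at hmellin
  rw [← tsum_mul_left, hmellin.tsum_eq]

theorem hasSum_alternating_one_div_pow {k : ℕ} {s : ℝ}
    (h : HasSum (fun n : ℕ => 1 / (n : ℝ) ^ k) s) :
    HasSum (fun n : ℕ => (-1) ^ (n + 1) / (n : ℝ) ^ k) ((1 - 2 / 2 ^ k) * s) := by
  have heven : HasSum (fun n : ℕ => 1 / ((2 * n : ℕ) : ℝ) ^ k) (s / 2 ^ k) := by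
    refine (h.div_const (2 ^ k)).congr_fun fun n => ?_
    push_cast
    rw [mul_pow, div_div, mul_comm]
  obtain ⟨o, hodd⟩ : Summable fun n : ℕ => 1 / ((2 * n + 1 : ℕ) : ℝ) ^ k :=
    h.summable.comp_injective fun a b hab => by omega
  have ho : s / 2 ^ k + o = s :=
    (HasSum.even_add_odd (f := fun n : ℕ => 1 / (n : ℝ) ^ k) heven hodd).unique h
  have heven' : HasSum (fun n : ℕ => (-1) ^ (2 * n + 1) / ((2 * n : ℕ) : ℝ) ^ k) (-(s / 2 ^ k)) :=
    heven.neg.congr_fun fun n => by simp [pow_succ, neg_div]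
  have hodd' : HasSum (fun n : ℕ => (-1) ^ (2 * n + 1 + 1) / ((2 * n + 1 : ℕ) : ℝ) ^ k) o :=
    hodd.congr_fun fun n => by simp [pow_succ]
  convert HasSum.even_add_odd (f := fun n : ℕ => (-1) ^ (n + 1) / (n : ℝ) ^ k) heven' hodd' using 1
  linear_combination -ho

theorem bernoulli'_five : bernoulli' 5 = 0 := by
  rw [bernoulli'_def]
  norm_num [Finset.sum_range_succ, bernoulli'_four, Nat.choose]

theorem bernoulli'_six : bernoulli' 6 = 1 / 42 := by
  rw [bernoulli'_def]
  norm_num [Finset.sum_range_succ, bernoulli'_four, bernoulli'_five, Nat.choose]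

theorem hasSum_zeta_six : HasSum (fun n : ℕ => (1 : ℝ) / (n : ℝ) ^ 6) (π ^ 6 / 945) := by
  convert hasSum_zeta_nat (k := 3) three_ne_zero using 1
  rw [bernoulli_eq_bernoulli'_of_ne_one (by decide), bernoulli'_six]
  norm_num [Nat.factorial]
  ring

theorem stmt7 : ∫ z : ℝ, 21 * z ^ 6 / (31 * π ^ 6) * g z = 1 := by
  set F : ℝ → ℝ := fun z => 21 * z ^ 6 / (31 * π ^ 6) * g z
  have hF_abs (z : ℝ) : F |z| = F z := by
    rcases abs_choice z with h | h <;> simp only [F, h, g_neg, Even.neg_pow (by decide : Even 6)]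
  have hη := hasSum_alternating_one_div_pow hasSum_zeta_six
  calc ∫ z, F z = ∫ z, F |z| := by simp only [hF_abs]
    _ = 2 * ∫ t in Ioi 0, F t := integral_comp_abs
    _ = 2 * ∫ t in Ioi 0, 21 / (31 * π ^ 6) * (t ^ 6 * g t) := by
      congr 1
      exact integral_congr_ae (.of_forall fun t => by simp only [F]; ring)
    _ = 1 := by
      rw [integral_const_mul, integral_pow_mul_g (by norm_num), hη.tsum_eq]
      norm_num [Nat.factorial]
      field_simp
      ring
end

section
/- If Z ~ AbSLG(α,β), then E(Z) = -14(5π²α + 7π⁴β)/(210 + 35π²α² + 98π⁴αβ + 155π⁶β²). -/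
open Real MeasureTheory Filter

/-!
Expanding the square, `z * f z α β` is `(C α β)⁻¹` times a polynomial of degree 7 in `z` times the
logistic density `g`. As `g` is even, the odd moments vanish and only `∫ z² g = π² / 3` and
`∫ z⁴ g = 7π⁴ / 15` remain. Integrating by parts against the antiderivative `-(eᶻ + 1)⁻¹` of `g`
turns `∫₀^∞ zᵏ⁺¹ g` into `(k + 1) ∫₀^∞ zᵏ / (eᶻ + 1)`; expanding `(eᶻ + 1)⁻¹` as a geometric
series in `e⁻ᶻ` evaluates the latter as `k! η(k + 1)`, and `η(s) = (1 - 2¹⁻ˢ) ζ(s)` with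
`ζ(2) = π² / 6`, `ζ(4) = π⁴ / 90`.
-/

open Set Topology
open scoped Nat

section EvenOdd

variable {E : Type*} [NormedAddCommGroup E]

theorem Function.Odd.integral_eq_zero [NormedSpace ℝ E] {f : ℝ → E} (hf : f.Odd) :
    ∫ x, f x = 0 := by
  have h := integral_neg_eq_self f volume
  rw [show (fun x => f (-x)) = fun x => -f x from funext hf, integral_neg,
    neg_eq_iff_add_eq_zero, ← two_smul ℝ] at h
  exact (smul_eq_zero.mp h).resolve_left two_ne_zero

theorem Function.Even.integrable_of_integrableOn_Ioi {f : ℝ → E} (hf : f.Even)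
    (h : IntegrableOn f (Ioi 0)) : Integrable f := by
  have hIic : IntegrableOn f (Iic 0) := by
    have hneg : MeasurableEmbedding fun x : ℝ => -x := (Homeomorph.neg ℝ).measurableEmbedding
    rw [← Measure.map_neg_eq_self (volume : Measure ℝ), hneg.integrableOn_map_iff]
    simp only [Function.comp_def, hf.eq, neg_preimage, neg_Iic, neg_zero]
    exact Iff.mpr integrableOn_Ici_iff_integrableOn_Ioi h
  simpa using hIic.union h

theorem Function.Even.integral_eq_two_mul_setIntegral_Ioi {f : ℝ → ℝ} (hf : f.Even) :
    ∫ x, f x = 2 * ∫ x in Ioi 0, f x := by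
  have habs : ∀ x, f x = f |x| := fun x => by
    rcases abs_choice x with h | h <;> rw [h]; exact (hf x).symm
  rw [integral_congr_ae (ae_of_all _ habs), integral_comp_abs]

end EvenOdd

theorem integrableOn_pow_mul_exp_neg_mul_Ioi {c : ℝ} (hc : 0 < c) (k : ℕ) :
    IntegrableOn (fun z : ℝ => z ^ k * exp (-(c * z))) (Ioi 0) := by
  have h := integrableOn_rpow_mul_exp_neg_mul_rpow (p := 1) (s := k) (b := c)
    (by linarith [(Nat.cast_nonneg k : (0 : ℝ) ≤ k)]) one_pos hc
  refine h.congr_fun (fun x _ => ?_) measurableSet_Ioi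
  simp [Real.rpow_natCast]

theorem integral_pow_mul_exp_neg_mul_Ioi {c : ℝ} (hc : 0 < c) (k : ℕ) :
    ∫ z in Ioi (0 : ℝ), z ^ k * exp (-(c * z)) = k ! / c ^ (k + 1) := by
  calc ∫ z in Ioi (0 : ℝ), z ^ k * exp (-(c * z))
      = ∫ z in Ioi (0 : ℝ), z ^ ((k : ℝ) + 1 - 1) * exp (-(c * z)) := by
        simp [Real.rpow_natCast]
    _ = (1 / c) ^ ((k : ℝ) + 1) * Gamma ((k : ℝ) + 1) :=
        integral_rpow_mul_exp_neg_mul_Ioi (by positivity) hc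
    _ = k ! / c ^ (k + 1) := by
        rw [Gamma_nat_eq_factorial, ← Nat.cast_succ, Real.rpow_natCast, Nat.succ_eq_add_one,
          div_pow, one_pow]
        field_simp

theorem integrableOn_pow_mul_Ioi_of_norm_le_exp_neg {u : ℝ → ℝ} (hu : Continuous u)
    (hle : ∀ z, ‖u z‖ ≤ exp (-z)) (k : ℕ) :
    IntegrableOn (fun z => z ^ k * u z) (Ioi 0) := by
  refine (integrableOn_pow_mul_exp_neg_mul_Ioi one_pos k).mono'
    ((continuous_pow k).mul hu).aestronglyMeasurable ?_
  filter_upwards [ae_restrict_mem measurableSet_Ioi] with z hz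
  rw [norm_mul, norm_pow, Real.norm_of_nonneg (le_of_lt hz), one_mul]
  exact mul_le_mul_of_nonneg_left (hle z) (pow_nonneg (le_of_lt hz) k)

theorem hasSum_integral_of_nonneg_of_hasSum {α : Type*} [MeasurableSpace α] {μ : Measure α}
    {F : ℕ → α → ℝ} {f : α → ℝ} (hF_meas : ∀ n, AEStronglyMeasurable (F n) μ)
    (hF_nonneg : ∀ n, 0 ≤ᵐ[μ] F n) (hf : Integrable f μ)
    (h_lim : ∀ᵐ a ∂μ, HasSum (fun n => F n a) (f a)) :
    HasSum (fun n => ∫ a, F n a ∂μ) (∫ a, f a ∂μ) :=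
  hasSum_integral_of_dominated_convergence F hF_meas
    (fun n => (hF_nonneg n).mono fun _ ha => (Real.norm_of_nonneg ha).le)
    (h_lim.mono fun _ ha => ha.summable)
    (hf.congr (h_lim.mono fun _ ha => ha.tsum_eq.symm)) h_lim

theorem g_eq_exp_div (z : ℝ) : g z = exp z / (exp z + 1) ^ 2 := by
  rw [g, exp_neg]
  field_simp

theorem g_even : Function.Even g := fun z => by
  rw [g_eq_exp_div, g, exp_neg]
  field_simp
  ring

theorem g_nonneg (z : ℝ) : 0 ≤ g z := by
  unfold g
  positivity

theorem g_le_exp_neg (z : ℝ) : g z ≤ exp (-z) := by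
  rw [g, div_le_iff₀ (by positivity)]
  nlinarith [exp_pos (-z), sq_nonneg (exp (-z))]

theorem continuous_g : Continuous g := by
  unfold g
  fun_prop (disch := intro; positivity)

theorem inv_exp_add_one_le_exp_neg (z : ℝ) : (exp z + 1)⁻¹ ≤ exp (-z) := by
  rw [exp_neg]
  exact inv_anti₀ (exp_pos z) (by linarith)

theorem hasDerivAt_neg_inv_exp_add_one (z : ℝ) :
    HasDerivAt (fun t => -(exp t + 1)⁻¹) (g z) z := by
  have h := (((hasDerivAt_exp z).add_const 1).inv (by positivity)).neg
  rwa [neg_div, neg_neg, ← g_eq_exp_div] at h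

theorem integrableOn_pow_mul_g_Ioi (k : ℕ) : IntegrableOn (fun z => z ^ k * g z) (Ioi 0) :=
  integrableOn_pow_mul_Ioi_of_norm_le_exp_neg continuous_g
    (fun z => by rw [Real.norm_of_nonneg (g_nonneg z)]; exact g_le_exp_neg z) k

theorem integrableOn_pow_mul_inv_exp_add_one_Ioi (k : ℕ) :
    IntegrableOn (fun z => z ^ k * (exp z + 1)⁻¹) (Ioi 0) :=
  integrableOn_pow_mul_Ioi_of_norm_le_exp_neg (by fun_prop (disch := intro; positivity))
    (fun z => by rw [Real.norm_of_nonneg (by positivity)]; exact inv_exp_add_one_le_exp_neg z) k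

theorem integrable_pow_mul_g (k : ℕ) : Integrable fun z => z ^ k * g z := by
  have habs : Integrable fun z => |z| ^ k * g z := by
    refine Function.Even.integrable_of_integrableOn_Ioi (fun z => by simp [g_even.eq z]) ?_
    exact (integrableOn_pow_mul_g_Ioi k).congr_fun
      (fun z hz => by rw [abs_of_pos (mem_Ioi.mp hz)]) measurableSet_Ioi
  refine habs.mono ((continuous_pow k).mul continuous_g).aestronglyMeasurable
    (ae_of_all _ fun z => ?_)
  simp

theorem integral_pow_mul_g_of_odd {k : ℕ} (hk : Odd k) : ∫ z, z ^ k * g z = 0 :=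
  Function.Odd.integral_eq_zero fun z => by rw [g_even.eq, hk.neg_pow, neg_mul]

theorem integral_pow_mul_g_of_even {k : ℕ} (hk : Even k) :
    ∫ z, z ^ k * g z = 2 * ∫ z in Ioi 0, z ^ k * g z :=
  Function.Even.integral_eq_two_mul_setIntegral_Ioi fun z => by rw [g_even.eq, hk.neg_pow]

theorem setIntegral_Ioi_pow_succ_mul_g (k : ℕ) :
    ∫ z in Ioi 0, z ^ (k + 1) * g z = (k + 1) * ∫ z in Ioi 0, z ^ k * (exp z + 1)⁻¹ := by
  set v : ℝ → ℝ := fun t => -(exp t + 1)⁻¹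
  have huv : Continuous fun z => z ^ (k + 1) * v z := by
    fun_prop (disch := intro; positivity)
  have h_zero : Tendsto (fun z => z ^ (k + 1) * v z) (𝓝[>] 0) (𝓝 0) := by
    simpa using (huv.tendsto 0).mono_left nhdsWithin_le_nhds
  have h_infty : Tendsto (fun z => z ^ (k + 1) * v z) atTop (𝓝 0) := by
    refine squeeze_zero_norm' ?_ (tendsto_pow_mul_exp_neg_atTop_nhds_zero (k + 1))
    filter_upwards [eventually_ge_atTop 0] with t ht
    rw [norm_mul, norm_neg, norm_pow, norm_inv, Real.norm_of_nonneg ht,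
      Real.norm_of_nonneg (by positivity)]
    exact mul_le_mul_of_nonneg_left (inv_exp_add_one_le_exp_neg t) (by positivity)
  have hu'v : IntegrableOn (fun z => ((k + 1) * z ^ k) * v z) (Ioi 0) :=
    IntegrableOn.congr_fun ((integrableOn_pow_mul_inv_exp_add_one_Ioi k).const_mul (-(k + 1)))
      (fun z _ => by simp only [v]; ring) measurableSet_Ioi
  have hibp := integral_Ioi_mul_deriv_eq_deriv_mul
    (fun z _ => by simpa using hasDerivAt_pow (k + 1) z) (fun z _ => hasDerivAt_neg_inv_exp_add_one z)
    (integrableOn_pow_mul_g_Ioi (k + 1)) hu'v h_zero h_infty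
  rw [hibp, sub_self, zero_sub, ← integral_neg, ← integral_const_mul]
  exact setIntegral_congr_fun measurableSet_Ioi fun z _ => by ring

theorem hasSum_inv_exp_add_one {z : ℝ} (hz : 0 < z) :
    HasSum (fun j : ℕ => exp (-((2 * j + 1) * z)) - exp (-((2 * j + 2) * z))) (exp z + 1)⁻¹ := by
  set x := exp (-z) with hx
  have hx0 : 0 < x := exp_pos _
  have hx1 : x < 1 := exp_lt_one_iff.mpr (by linarith)
  have hterm : ∀ j : ℕ,
      exp (-((2 * j + 1) * z)) - exp (-((2 * j + 2) * z)) = (x - x ^ 2) * (x ^ 2) ^ j := by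
    intro j
    rw [show -((2 * j + 1) * z) = ((2 * j + 1 : ℕ) : ℝ) * -z by push_cast; ring,
      show -((2 * j + 2) * z) = ((2 * j + 2 : ℕ) : ℝ) * -z by push_cast; ring,
      exp_nat_mul, exp_nat_mul, ← pow_mul]
    ring
  have hlim : (exp z + 1)⁻¹ = (x - x ^ 2) * (1 - x ^ 2)⁻¹ := by
    have hxz : exp z = x⁻¹ := by rw [hx, exp_neg, inv_inv]
    have : (1 : ℝ) - x ^ 2 ≠ 0 := by nlinarith
    rw [hxz]
    field_simp
    ring
  simp_rw [hterm, hlim]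
  exact (hasSum_geometric_of_lt_one (by positivity) (by nlinarith)).mul_left _

theorem hasSum_integral_pow_mul_inv_exp_add_one (k : ℕ) :
    HasSum (fun j : ℕ => (k ! : ℝ) * (1 / (2 * j + 1) ^ (k + 1) - 1 / (2 * j + 2) ^ (k + 1)))
      (∫ z in Ioi 0, z ^ k * (exp z + 1)⁻¹) := by
  set F : ℕ → ℝ → ℝ := fun j z => z ^ k * (exp (-((2 * j + 1) * z)) - exp (-((2 * j + 2) * z)))
  have hodd : ∀ j : ℕ, (0 : ℝ) < 2 * j + 1 := fun j => by positivity
  have heven : ∀ j : ℕ, (0 : ℝ) < 2 * j + 2 := fun j => by positivity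
  have hF : ∀ j : ℕ, ∫ z in Ioi 0, F j z
      = k ! * (1 / (2 * j + 1) ^ (k + 1) - 1 / (2 * j + 2) ^ (k + 1)) := by
    intro j
    simp only [F, mul_sub]
    rw [integral_sub (integrableOn_pow_mul_exp_neg_mul_Ioi (hodd j) k)
      (integrableOn_pow_mul_exp_neg_mul_Ioi (heven j) k),
      integral_pow_mul_exp_neg_mul_Ioi (hodd j), integral_pow_mul_exp_neg_mul_Ioi (heven j)]
    ring
  simp_rw [← hF]
  refine hasSum_integral_of_nonneg_of_hasSum (fun j => by fun_prop) (fun j => ?_)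
    (integrableOn_pow_mul_inv_exp_add_one_Ioi k) ?_
  · filter_upwards [ae_restrict_mem measurableSet_Ioi] with z hz
    have hdecay : exp (-((2 * j + 2) * z)) ≤ exp (-((2 * j + 1) * z)) :=
      exp_le_exp.mpr (by nlinarith [mem_Ioi.mp hz])
    exact mul_nonneg (pow_nonneg (le_of_lt hz) k) (sub_nonneg.mpr hdecay)
  · filter_upwards [ae_restrict_mem measurableSet_Ioi] with z hz
    exact (hasSum_inv_exp_add_one hz).mul_left _

theorem hasSum_dirichletEta_of_hasSum_zeta {m : ℕ} (hm : m ≠ 0) {S : ℝ}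
    (hS : HasSum (fun n : ℕ => 1 / (n : ℝ) ^ m) S) :
    HasSum (fun j : ℕ => 1 / (2 * j + 1 : ℝ) ^ m - 1 / (2 * j + 2 : ℝ) ^ m)
      ((1 - 2 / 2 ^ m) * S) := by
  have heven : HasSum (fun j : ℕ => 1 / ((2 * j : ℕ) : ℝ) ^ m) (S / 2 ^ m) := by
    simpa [mul_pow, div_eq_mul_inv, mul_comm] using hS.div_const (2 ^ m)
  have hodd : HasSum (fun j : ℕ => 1 / ((2 * j + 1 : ℕ) : ℝ) ^ m) (S - S / 2 ^ m) := by
    obtain ⟨t, ht⟩ := hS.summable.comp_injective (i := fun j => 2 * j + 1)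
      fun i j hij => by simpa using hij
    rwa [show t = S - S / 2 ^ m by linarith [hS.unique (heven.even_add_odd ht)]] at ht
  have heven_succ : HasSum (fun j : ℕ => 1 / ((2 * (j + 1) : ℕ) : ℝ) ^ m) (S / 2 ^ m) := by
    rw [← hasSum_nat_add_iff' 1] at heven
    simpa [zero_pow hm] using heven
  have hterm : ∀ j : ℕ, 1 / (2 * j + 1 : ℝ) ^ m - 1 / (2 * j + 2 : ℝ) ^ m
      = 1 / ((2 * j + 1 : ℕ) : ℝ) ^ m - 1 / ((2 * (j + 1) : ℕ) : ℝ) ^ m := fun j => by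
    push_cast
    ring
  simp_rw [hterm, show (1 - 2 / 2 ^ m) * S = S - S / 2 ^ m - S / 2 ^ m by ring]
  exact hodd.sub heven_succ

theorem integral_pow_succ_mul_g_of_odd {n : ℕ} (hn : Odd n) {S : ℝ}
    (hS : HasSum (fun m : ℕ => 1 / (m : ℝ) ^ (n + 1)) S) :
    ∫ z, z ^ (n + 1) * g z = 2 * (n + 1)! * ((1 - 2 / 2 ^ (n + 1)) * S) := by
  have heta := (hasSum_dirichletEta_of_hasSum_zeta n.succ_ne_zero hS).mul_left (n ! : ℝ)
  simp only [Nat.succ_eq_add_one] at heta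
  rw [integral_pow_mul_g_of_even hn.add_one, setIntegral_Ioi_pow_succ_mul_g,
    (hasSum_integral_pow_mul_inv_exp_add_one n).unique heta, Nat.factorial_succ]
  push_cast
  ring

theorem integral_sq_mul_g : ∫ z, z ^ 2 * g z = π ^ 2 / 3 := by
  rw [integral_pow_succ_mul_g_of_odd odd_one hasSum_zeta_two]
  norm_num [Nat.factorial]
  ring

theorem integral_pow_four_mul_g : ∫ z, z ^ 4 * g z = 7 * π ^ 4 / 15 := by
  rw [integral_pow_succ_mul_g_of_odd (n := 3) (by decide) hasSum_zeta_four]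
  norm_num [Nat.factorial]
  ring

theorem C_pos (α β : ℝ) : 0 < C α β := by
  unfold C
  nlinarith [sq_nonneg (5 * π * α + 7 * π ^ 3 * β), sq_nonneg (π ^ 3 * β), pi_pos]

theorem stmt13 (α β : ℝ) :
    ∫ z : ℝ, z * f z α β =
      -14 * (5 * π ^ 2 * α + 7 * π ^ 4 * β) /
        (210 + 35 * π ^ 2 * α ^ 2 + 98 * π ^ 4 * α * β + 155 * π ^ 6 * β ^ 2) := by
  set c : Fin 8 → ℝ := ![0, 2, -2 * α, α ^ 2, -2 * β, 2 * α * β, 0, β ^ 2]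
  have hexpand : (fun z => z * f z α β)
      = fun z => (C α β)⁻¹ * ∑ i, c i * (z ^ (i : ℕ) * g z) := by
    ext z
    simp only [f, c, Fin.sum_univ_eight, Fin.coe_ofNat_eq_mod, Nat.reduceMod, Matrix.cons_val]
    ring
  rw [hexpand, integral_const_mul,
    integral_finsetSum _ fun (i : Fin 8) _ => (integrable_pow_mul_g i).const_mul (c i)]
  simp only [integral_const_mul, Fin.sum_univ_eight, c, Fin.coe_ofNat_eq_mod, Nat.reduceMod,
    Matrix.cons_val]
  rw [integral_sq_mul_g, integral_pow_four_mul_g, integral_pow_mul_g_of_odd odd_one,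
    integral_pow_mul_g_of_odd (k := 3) (by decide), integral_pow_mul_g_of_odd (k := 5) (by decide),
    integral_pow_mul_g_of_odd (k := 7) (by decide)]
  have hC := C_pos α β
  unfold C at hC ⊢
  field_simp
  ring
end
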